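/- Let R be a discrete valuation ring with maximal ideal m and I = m^d a nonzero proper ideal. Let H be a finite R-module with H[m] ⊆ IH, and let M be a finite R-module. Define w(M,H) = #Hom_R(M, H[I]) if there exists a surjection M → H/IH, and w(M,H) = 0 otherwise. Then #Sur_R(M, H) = w(M,H) · #Sur_R(IM, IH), where Sur_R denotes the set of surjective R-module homomorphisms. -/

import Mathlib

/-! Restriction `f ↦ f|_{IM}` is an additive map `Hom(M, H) → Hom(IM, IH)` with kernel
`Hom(M, H[I])`. It is onto: `M` is a sum of cyclic modules `R/(q)`, and on each of them a map
`IM → IH` lifts because `q` and the generator `r` of `I` are comparable under divisibility.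
Moreover `f` is onto iff its restriction is: if `f(IM) = IH` then `H = f(M) + H[I]`, and
`H[I] ⊆ 𝔪H` follows from `H[𝔪] ⊆ IH`, so Nakayama applies. Hence `Sur(M, H)` is the preimage of
`Sur(IM, IH)`, all of whose fibres are cosets of the kernel; and if no surjection `M → H/IH`
exists, `Sur(M, H)` is empty. -/

open scoped Classical

open Submodule

section

variable {R : Type*} [CommRing R] {M H : Type*} [AddCommGroup M] [Module R M]
  [AddCommGroup H] [Module R H]

theorem mem_span_singleton_smul_top_iff {r : R} {x : M} :
    x ∈ Ideal.span {r} • (⊤ : Submodule R M) ↔ ∃ y, r • y = x := by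
  simp [Submodule.ideal_span_singleton_smul, Submodule.mem_smul_pointwise_iff_exists]

section Restriction

variable (I : Ideal R)

def restrictToSmulTop :
    (M →ₗ[R] H) →+ ((I • ⊤ : Submodule R M) →ₗ[R] (I • ⊤ : Submodule R H)) where
  toFun f := f.restrict fun _ hx => smul_top_le_comap_smul_top I f hx
  map_zero' := rfl
  map_add' _ _ := rfl

variable {I}

@[simp]
theorem restrictToSmulTop_apply_coe (f : M →ₗ[R] H) (x : (I • ⊤ : Submodule R M)) :
    (restrictToSmulTop I f x : H) = f x :=
  rfl

theorem mem_ker_restrictToSmulTop_iff {f : M →ₗ[R] H} :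
    f ∈ (restrictToSmulTop I).ker ↔ ∀ x, f x ∈ torsionBySet R H I := by
  simp only [AddMonoidHom.mem_ker, mem_torsionBySet_iff]
  constructor
  · intro hf x ⟨a, ha⟩
    rw [← map_smul]
    simpa using congr(($hf ⟨a • x, smul_mem_smul ha trivial⟩ : H))
  · intro hf
    ext ⟨x, hx⟩
    simp only [restrictToSmulTop_apply_coe, LinearMap.zero_apply, ZeroMemClass.coe_zero]
    refine smul_induction_on hx (fun a ha y _ => ?_) fun y z hy hz => ?_
    · rw [map_smul]; exact hf y ⟨a, ha⟩
    · rw [map_add, hy, hz, add_zero]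

def kerRestrictToSmulTopEquiv :
    (restrictToSmulTop (M := M) (H := H) I).ker ≃ (M →ₗ[R] torsionBySet R H I) where
  toFun f := f.1.codRestrict _ (mem_ker_restrictToSmulTop_iff.mp f.2)
  invFun g := ⟨(torsionBySet R H I).subtype ∘ₗ g,
    mem_ker_restrictToSmulTop_iff.mpr fun x => (g x).2⟩
  left_inv _ := rfl
  right_inv _ := rfl

theorem surjective_restrictToSmulTop_iff {f : M →ₗ[R] H} :
    Function.Surjective (restrictToSmulTop I f) ↔ I • ⊤ ≤ I • LinearMap.range f := by
  rw [LinearMap.range_eq_map, ← map_smul'']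
  constructor
  · intro hf y hy
    obtain ⟨x, hx⟩ := hf ⟨y, hy⟩
    exact ⟨x, x.2, congr($hx.1)⟩
  · intro hf y
    obtain ⟨x, hx, hxy⟩ := hf y.2
    exact ⟨⟨x, hx⟩, Subtype.ext hxy⟩

end Restriction

theorem AddMonoidHom.card_preimage_eq_card_mul_card_ker {G G' : Type*} [AddGroup G]
    [AddGroup G'] {φ : G →+ G'} (hφ : Function.Surjective φ) (S : Set G') :
    Nat.card (φ ⁻¹' S) = Nat.card S * Nat.card φ.ker := by
  rw [← Nat.card_prod]
  exact Nat.card_congr <|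
    (Equiv.sigmaSubtypeFiberEquivSubtype φ fun _ => Iff.rfl).symm.trans <|
      Equiv.sigmaEquivProdOfEquiv fun s => φ.fiberEquivKerOfSurjective hφ s.1

theorem torsionBy_pow_le_span_singleton_smul_top {r : R} {d : ℕ}
    (htors : torsionBy R H r ≤ Ideal.span {r ^ d} • ⊤) :
    torsionBy R H (r ^ d) ≤ Ideal.span {r} • ⊤ := by
  suffices ∀ k ≤ d, torsionBy R H (r ^ k) ≤ Ideal.span {r} • ⊤ from this d le_rfl
  intro k
  induction k with
  | zero => simp
  | succ k ih =>
    intro hk x hx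
    rw [mem_torsionBy_iff, pow_succ', mul_smul] at hx
    -- `r ^ k • x ∈ H[r]` is some `r ^ d • y`, and then `x - r ^ (d - k) • y ∈ H[r ^ k]`
    obtain ⟨y, hy⟩ := mem_span_singleton_smul_top_iff.mp (htors hx)
    have hxy : x - r ^ (d - k) • y ∈ torsionBy R H (r ^ k) := by
      rw [mem_torsionBy_iff, smul_sub, smul_smul, ← pow_add, Nat.add_sub_cancel' (by omega), hy,
        sub_self]
    have hy' : r ^ (d - k) • y ∈ Ideal.span {r} • (⊤ : Submodule R H) :=
      mem_span_singleton_smul_top_iff.mpr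
        ⟨r ^ (d - k - 1) • y, by rw [smul_smul, ← pow_succ', Nat.sub_add_cancel (by omega)]⟩
    simpa using add_mem (ih (by omega) hxy) hy'

theorem eq_top_of_span_singleton_smul_top_le [IsLocalRing R] [Module.Finite R H] {r : R}
    (htors : torsionBy R H r ≤ IsLocalRing.maximalIdeal R • ⊤) {N : Submodule R H}
    (h : Ideal.span {r} • ⊤ ≤ Ideal.span {r} • N) : N = ⊤ := by
  refine top_le_iff.mp <| le_of_le_smul_of_le_jacobson_bot Module.Finite.fg_top
    (IsLocalRing.jacobson_eq_maximalIdeal ⊥ bot_ne_top).ge fun y _ => ?_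
  obtain ⟨n, hn, hny⟩ : ∃ n ∈ N, r • n = r • y := by
    simpa [Submodule.ideal_span_singleton_smul, Submodule.mem_smul_pointwise_iff_exists] using
      h (mem_span_singleton_smul_top_iff.mpr ⟨y, rfl⟩)
  have hyn : y - n ∈ torsionBy R H r := by rw [mem_torsionBy_iff, smul_sub, hny, sub_self]
  simpa using add_mem_sup hn (htors hyn)

variable (R M H) in
def LiftsThroughSmul (r : R) : Prop :=
  ∀ ψ : M →ₗ[R] H, torsionBy R M r ≤ LinearMap.ker ψ →
    LinearMap.range ψ ≤ Ideal.span {r} • ⊤ → ∃ f : M →ₗ[R] H, r • f = ψ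

theorem liftsThroughSmul_quotient_span_singleton {q r : R} (hqr : q ∣ r ∨ r ∣ q) :
    LiftsThroughSmul R (R ⧸ R ∙ q) H r := by
  intro ψ hker hrange
  have hψ (f : (R ⧸ R ∙ q) →ₗ[R] H)
      (hf : f (Submodule.Quotient.mk 1) = ψ (Submodule.Quotient.mk 1)) : f = ψ :=
    linearMap_qext _ (LinearMap.ext_ring hf)
  obtain ⟨h, hh⟩ :=
    mem_span_singleton_smul_top_iff.mp (hrange ⟨Submodule.Quotient.mk 1, rfl⟩)
  rcases hqr with ⟨s, rfl⟩ | ⟨s, rfl⟩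
  · have h1 : ψ (Submodule.Quotient.mk 1) = 0 := hker <| by
      rw [mem_torsionBy_iff, ← Submodule.Quotient.mk_smul, Submodule.Quotient.mk_eq_zero]
      simpa [mul_comm] using smul_mem _ s (mem_span_singleton_self q)
    exact ⟨0, hψ _ (by rw [smul_zero, LinearMap.zero_apply, h1])⟩
  · have hs : (r * s) • h = 0 := by
      have : s • Submodule.Quotient.mk (p := R ∙ r * s) (1 : R) ∈ torsionBy R _ r := by
        rw [mem_torsionBy_iff, smul_smul, ← Submodule.Quotient.mk_smul,
          Submodule.Quotient.mk_eq_zero, smul_eq_mul, mul_one]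
        exact mem_span_singleton_self (r * s)
      rw [mul_comm, mul_smul, hh, ← map_smul]
      exact hker this
    refine ⟨(R ∙ r * s).liftQ (LinearMap.toSpanSingleton R H h) ?_, hψ _ ?_⟩
    · rwa [span_singleton_le_iff_mem]
    · simp only [LinearMap.smul_apply, Submodule.liftQ_apply, LinearMap.toSpanSingleton_apply,
        one_smul, hh]

theorem LiftsThroughSmul.directSum {r : R} {ι : Type*} {N : ι → Type*}
    [∀ i, AddCommGroup (N i)] [∀ i, Module R (N i)] (h : ∀ i, LiftsThroughSmul R (N i) H r) :
    LiftsThroughSmul R (DirectSum ι N) H r := by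
  intro ψ hker hrange
  have hker' : ∀ i, torsionBy R (N i) r ≤ LinearMap.ker (ψ ∘ₗ DirectSum.lof R ι N i) := by
    intro i x hx
    apply hker
    rw [mem_torsionBy_iff] at hx ⊢
    rw [← map_smul, hx, map_zero]
  choose f hf using fun i => h i _ (hker' i) ((LinearMap.range_comp_le_range _ _).trans hrange)
  refine ⟨DirectSum.toModule R ι H f, DirectSum.linearMap_ext R fun i => ?_⟩
  rw [← hf]
  ext x
  simp [DirectSum.toModule_lof]

theorem LiftsThroughSmul.of_linearEquiv {r : R} {N : Type*} [AddCommGroup N] [Module R N]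
    (e : M ≃ₗ[R] N) (h : LiftsThroughSmul R N H r) : LiftsThroughSmul R M H r := by
  intro ψ hker hrange
  have hker' : torsionBy R N r ≤ LinearMap.ker (ψ ∘ₗ e.symm.toLinearMap) := by
    intro x hx
    apply hker
    rw [mem_torsionBy_iff] at hx ⊢
    rw [← map_smul, hx, map_zero]
  obtain ⟨f, hf⟩ := h _ hker' ((LinearMap.range_comp_le_range _ _).trans hrange)
  refine ⟨f ∘ₗ e.toLinearMap, ?_⟩
  rw [← LinearMap.smul_comp, hf, LinearMap.comp_assoc, e.symm_comp, LinearMap.comp_id]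

theorem Module.isTorsion_of_finite [IsDomain R] [Infinite R] [Finite M] :
    Module.IsTorsion R M := by
  intro x
  have : ¬ Function.Injective (LinearMap.toSpanSingleton R M x) := fun hinj =>
    (_root_.Finite.of_injective _ hinj).false
  rw [← LinearMap.ker_eq_bot] at this
  obtain ⟨a, ha, ha0⟩ := Submodule.exists_mem_ne_zero_of_ne_bot this
  exact ⟨⟨a, mem_nonZeroDivisors_of_ne_zero ha0⟩, ha⟩

variable (R) in
theorem IsDiscreteValuationRing.infinite [IsDomain R] [IsDiscreteValuationRing R] : Infinite R :=
  not_finite_iff_infinite.mp fun _ => not_isField R (Finite.isField_of_domain R)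

theorem liftsThroughSmul_of_finite [IsDomain R] [IsDiscreteValuationRing R] [Finite M] (r : R) :
    LiftsThroughSmul R M H r := by
  have := IsDiscreteValuationRing.infinite R
  obtain ⟨ι, _, p, _, e, ⟨E⟩⟩ :=
    Module.equiv_directSum_of_isTorsion (Module.isTorsion_of_finite (R := R) (M := M))
  exact .of_linearEquiv E <| .directSum fun i =>
    liftsThroughSmul_quotient_span_singleton (ValuationRing.dvd_total _ _)

theorem surjective_restrictToSmulTop_of_liftsThroughSmul {r : R}
    (h : LiftsThroughSmul R M H r) :
    Function.Surjective (restrictToSmulTop (M := M) (H := H) (Ideal.span {r})) := by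
  intro g
  let μ : M →ₗ[R] (Ideal.span {r} • ⊤ : Submodule R M) :=
    (r • LinearMap.id).codRestrict _ fun x => mem_span_singleton_smul_top_iff.mpr ⟨x, rfl⟩
  have hker : torsionBy R M r ≤ LinearMap.ker (Submodule.subtype _ ∘ₗ g ∘ₗ μ) := by
    intro x hx
    have : μ x = 0 := Subtype.ext hx
    simp [this]
  have hrange : LinearMap.range (Submodule.subtype _ ∘ₗ g ∘ₗ μ) ≤ Ideal.span {r} • ⊤ := by
    rintro _ ⟨x, rfl⟩
    exact (g (μ x)).2
  obtain ⟨f, hf⟩ := h _ hker hrange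
  refine ⟨f, LinearMap.ext fun ⟨w, hw⟩ => Subtype.ext ?_⟩
  obtain ⟨y, rfl⟩ := mem_span_singleton_smul_top_iff.mp hw
  have hμ : μ y = ⟨r • y, hw⟩ := rfl
  simpa [map_smul, hμ] using congr($hf y)

theorem card_surjective_eq_card_mul_card [IsLocalRing R] [Module.Finite R H] {r : R}
    (hlift : Function.Surjective (restrictToSmulTop (M := M) (H := H) (Ideal.span {r})))
    (htors : torsionBy R H r ≤ IsLocalRing.maximalIdeal R • ⊤) :
    Nat.card {f : M →ₗ[R] H // Function.Surjective f} =
      Nat.card (M →ₗ[R] torsionBySet R H (Ideal.span {r} : Set R)) *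
      Nat.card {g : (Ideal.span {r} • ⊤ : Submodule R M) →ₗ[R]
        (Ideal.span {r} • ⊤ : Submodule R H) // Function.Surjective g} := by
  have hsurj (f : M →ₗ[R] H) :
      Function.Surjective f ↔ Function.Surjective (restrictToSmulTop (Ideal.span {r}) f) := by
    rw [surjective_restrictToSmulTop_iff, ← LinearMap.range_eq_top]
    exact ⟨fun hf => by rw [hf], eq_top_of_span_singleton_smul_top_le htors⟩
  rw [Nat.card_congr (Equiv.subtypeEquivRight hsurj),
    ← Nat.card_congr kerRestrictToSmulTopEquiv, mul_comm]
  exact AddMonoidHom.card_preimage_eq_card_mul_card_ker hlift {g | Function.Surjective g}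

end

theorem stmt_10_general (R : Type*) [CommRing R] [IsDomain R] [IsDiscreteValuationRing R]
    (d : ℕ) (I : Ideal R) (hI : I = (IsLocalRing.maximalIdeal R) ^ d)
    (H : Type*) [AddCommGroup H] [Module R H] [Finite H]
    (htors : Submodule.torsionBySet R H ((IsLocalRing.maximalIdeal R : Ideal R) : Set R) ≤
      I • (⊤ : Submodule R H))
    (M : Type*) [AddCommGroup M] [Module R M] [Finite M] :
    Nat.card {f : M →ₗ[R] H // Function.Surjective f} =
      (if Nonempty {f : M →ₗ[R] (H ⧸ (I • (⊤ : Submodule R H))) // Function.Surjective f}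
        then Nat.card (M →ₗ[R] ↥(Submodule.torsionBySet R H (I : Set R)))
        else 0) *
      Nat.card {f : ↥(I • (⊤ : Submodule R M)) →ₗ[R] ↥(I • (⊤ : Submodule R H)) //
        Function.Surjective f} := by
  obtain ⟨ϖ, hϖ⟩ := IsDiscreteValuationRing.exists_irreducible R
  have hm := hϖ.maximalIdeal_eq
  rw [hm, Ideal.span_singleton_pow] at hI
  subst hI
  rw [hm, torsionBySet_span_singleton_eq] at htors
  have htors' := torsionBy_pow_le_span_singleton_smul_top htors
  rw [← hm] at htors'
  split_ifs with hne
  · exact card_surjective_eq_card_mul_card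
      (surjective_restrictToSmulTop_of_liftsThroughSmul (liftsThroughSmul_of_finite _)) htors'
  · have : IsEmpty {f : M →ₗ[R] H // Function.Surjective f} :=
      ⟨fun f => hne ⟨⟨(mkQ _) ∘ₗ f.1, (mkQ_surjective _).comp f.2⟩⟩⟩
    rw [Nat.card_of_isEmpty, zero_mul]

/-- `#Sur_R(M, H) = w(M,H) ⬝ #Sur_R(IM, IH)` where `w(M,H) = #Hom_R(M, H[I])` if a surjection
`M ↠ H/IH` exists, and `0` otherwise; here `R` is a DVR, `I = 𝔪^d`, and `H[𝔪] ⊆ IH`. -/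
theorem stmt_10 (R : Type*) [CommRing R] [IsDomain R] [IsDiscreteValuationRing R]
    (d : ℕ) (hd : 1 ≤ d) (I : Ideal R) (hI : I = (IsLocalRing.maximalIdeal R) ^ d)
    (H : Type*) [AddCommGroup H] [Module R H] [Finite H]
    (htors : Submodule.torsionBySet R H ((IsLocalRing.maximalIdeal R : Ideal R) : Set R) ≤
      I • (⊤ : Submodule R H))
    (M : Type*) [AddCommGroup M] [Module R M] [Finite M] :
    Nat.card {f : M →ₗ[R] H // Function.Surjective f} =
      (if Nonempty {f : M →ₗ[R] (H ⧸ (I • (⊤ : Submodule R H))) // Function.Surjective f}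
        then Nat.card (M →ₗ[R] ↥(Submodule.torsionBySet R H (I : Set R)))
        else 0) *
      Nat.card {f : ↥(I • (⊤ : Submodule R M)) →ₗ[R] ↥(I • (⊤ : Submodule R H)) //
        Function.Surjective f} :=
  stmt_10_general R d I hI H htors M
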